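/- arXiv:1606.01213 — 5 statements merged into one kernel-verified Lean document; each statement's English description precedes it below -/
import Mathlib

section
/- If g₁ and g₂ are glides in the extended affine symmetric group with offsets k₁ and k₂ respectively, then g₂g₁ = ρ^{k₂}(g₁)·ρ^{-k₁}(g₂), where ρ is the automorphism shifting Coxeter generator indices by 1. -/
/-! Writing `gᵢ = tᵢ τ^{kᵢ}` with `tᵢ` translations, both sides of the identity equal
`t₂ (τ^{k₂} t₁ τ^{-k₂}) τ^{k₁ + k₂}`, once the translations `t₂` and `τ^{k₂} t₁ τ^{-k₂}`
are allowed to commute. -/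

section GlideCommutation

variable {G : Type*} [Group G]

theorem mul_eq_conj_mul_conj_of_commute (τ g₁ g₂ : G) (k₁ k₂ : ℤ)
    (h : Commute (τ ^ k₂ * (g₁ * τ ^ (-k₁)) * τ ^ (-k₂)) (g₂ * τ ^ (-k₂))) :
    g₂ * g₁ = (τ ^ k₂ * g₁ * τ ^ (-k₂)) * (τ ^ (-k₁) * g₂ * τ ^ k₁) :=
  calc g₂ * g₁
      = (g₂ * τ ^ (-k₂)) * (τ ^ k₂ * (g₁ * τ ^ (-k₁)) * τ ^ (-k₂)) * (τ ^ k₂ * τ ^ k₁) := by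
        group
    _ = (τ ^ k₂ * (g₁ * τ ^ (-k₁)) * τ ^ (-k₂)) * (g₂ * τ ^ (-k₂)) * (τ ^ k₂ * τ ^ k₁) := by
        rw [h.eq]
    _ = (τ ^ k₂ * g₁ * τ ^ (-k₂)) * (τ ^ (-k₁) * g₂ * τ ^ k₁) := by group

theorem mul_zpow_neg_mem_ker {H : Type*} [Group H] (φ : G →* H) {τ g : G} {k : ℤ}
    (hg : φ g = φ τ ^ k) : g * τ ^ (-k) ∈ φ.ker := by
  rw [MonoidHom.mem_ker, map_mul, map_zpow, hg, zpow_neg, mul_inv_cancel]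

theorem mul_eq_conj_mul_conj_of_map_eq_zpow {H : Type*} [Group H] (φ : G →* H)
    (hker : ∀ x y : G, φ x = 1 → φ y = 1 → Commute x y) (τ g₁ g₂ : G) (k₁ k₂ : ℤ)
    (hg₁ : φ g₁ = φ τ ^ k₁) (hg₂ : φ g₂ = φ τ ^ k₂) :
    g₂ * g₁ = (τ ^ k₂ * g₁ * τ ^ (-k₂)) * (τ ^ (-k₁) * g₂ * τ ^ k₁) := by
  have ht₁ := mul_zpow_neg_mem_ker φ hg₁
  have ht₂ := mul_zpow_neg_mem_ker φ hg₂
  have hconj : τ ^ k₂ * (g₁ * τ ^ (-k₁)) * τ ^ (-k₂) ∈ φ.ker := by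
    simpa only [zpow_neg] using φ.normal_ker.conj_mem _ ht₁ (τ ^ k₂)
  exact mul_eq_conj_mul_conj_of_commute τ g₁ g₂ k₁ k₂ (hker _ _ hconj ht₂)

end GlideCommutation

theorem Equiv.addRight_intCast_eq_zpow {R : Type*} [Ring R] (k : ℤ) :
    Equiv.addRight (k : R) = Equiv.addRight (1 : R) ^ k := by
  rw [Equiv.zsmul_addRight, zsmul_one]

theorem glide_commutation_general {G : Type*} [Group G] (n : ℕ)
    (φ : G →* Equiv.Perm (ZMod n))
    (hker : ∀ x y : G, φ x = 1 → φ y = 1 → x * y = y * x)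
    (τ : G) (hτ : φ τ = Equiv.addRight (1 : ZMod n))
    (g₁ g₂ : G) (k₁ k₂ : ℤ)
    (hg₁ : φ g₁ = Equiv.addRight (k₁ : ZMod n))
    (hg₂ : φ g₂ = Equiv.addRight (k₂ : ZMod n)) :
    g₂ * g₁ = (τ ^ k₂ * g₁ * τ ^ (-k₂)) * (τ ^ (-k₁) * g₂ * τ ^ k₁) := by
  rw [Equiv.addRight_intCast_eq_zpow, ← hτ] at hg₁ hg₂
  exact mul_eq_conj_mul_conj_of_map_eq_zpow φ hker τ g₁ g₂ k₁ k₂ hg₁ hg₂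

/-- In the extended affine symmetric group (modeled as a group `G` with a projection
`φ` to permutations of `ZMod n`, whose kernel — the translations — is commutative,
and an element `τ` with `φ τ` the rotation by `1`, realizing the index-shift
automorphism `ρ` as conjugation by `τ`), if `g₁, g₂` are glides of offsets
`k₁, k₂` (i.e. `φ gᵢ` is rotation by `kᵢ`), then
`g₂ g₁ = ρ^{k₂}(g₁) · ρ^{-k₁}(g₂)`. -/
theorem glide_commutation {G : Type*} [Group G] (n : ℕ) [NeZero n]
    (φ : G →* Equiv.Perm (ZMod n))
    (hker : ∀ x y : G, φ x = 1 → φ y = 1 → x * y = y * x)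
    (τ : G) (hτ : φ τ = Equiv.addRight (1 : ZMod n))
    (g₁ g₂ : G) (k₁ k₂ : ℤ)
    (hg₁ : φ g₁ = Equiv.addRight (k₁ : ZMod n))
    (hg₂ : φ g₂ = Equiv.addRight (k₂ : ZMod n)) :
    g₂ * g₁ = (τ ^ k₂ * g₁ * τ ^ (-k₂)) * (τ ^ (-k₁) * g₂ * τ ^ k₁) :=
  glide_commutation_general n φ hker τ hτ g₁ g₂ k₁ k₂ hg₁ hg₂
end

section
/- A subset S ⊆ ℤ is of the form w(ℤ_{≤a}) for some element w of the affine symmetric group Ŝₙ and some integer a if and only if: (1) b ∈ S implies b − n ∈ S; (2) S ∩ ℤ_{>0} is finite; and (3) ℤ_{<0} \ S is finite. -/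
/-!
Conditions (2) and (3) say that `S` is bounded above and contains a ray `ℤ_{≤ L}`.

If `w` commutes with `x ↦ x + n`, its displacement `w x - x` is `n`-periodic and hence bounded,
and so is that of `w⁻¹`; this gives (2) and (3) for `w(ℤ_{≤ a})`, and (1) is immediate.

Conversely, (1)–(3) make each residue class of `S` a nonempty down-set bounded above, i.e.
`{y ≡ x [n] | y ≤ t x}` for an `n`-periodic `t`. The map `x ↦ x + (t x - x % n)` translates every
residue class by a multiple of `n`, so it is an affine permutation, and it sends `ℤ_{< n}` onto
`S`. Its displacement over a period is a multiple `n a` of `n`, and precomposing with `x ↦ x - a`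
makes it zero.
-/

open Function Set

theorem finite_inter_Ioi_iff_bddAbove {α : Type*} [LinearOrder α] [LocallyFiniteOrder α]
    {S : Set α} (c : α) : (S ∩ Ioi c).Finite ↔ BddAbove S := by
  have : Nonempty α := ⟨c⟩
  refine ⟨fun h => ?_, fun h => ?_⟩
  · refine (h.bddAbove.union (bddAbove_Iic (a := c))).mono fun x hx => ?_
    exact (lt_or_ge c x).imp (fun hcx => ⟨hx, hcx⟩) id
  · exact BddBelow.finite_of_bddAbove ⟨c, fun x hx => hx.2.le⟩ (h.mono inter_subset_left)

theorem finite_Iio_diff_iff_exists_Iic_subset {α : Type*} [LinearOrder α] [LocallyFiniteOrder α]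
    [NoMinOrder α] {S : Set α} (c : α) : (Iio c \ S).Finite ↔ ∃ L, Iic L ⊆ S := by
  have : Nonempty α := ⟨c⟩
  refine ⟨fun h => ?_, fun ⟨L, hL⟩ => ?_⟩
  · obtain ⟨B, hB⟩ := h.bddBelow
    obtain ⟨L, hL⟩ := exists_lt (min B c)
    refine ⟨L, fun x hx => by_contra fun hxS => ?_⟩
    have hxL : x < min B c := lt_of_le_of_lt hx hL
    exact (hB ⟨hxL.trans_le (min_le_right B c), hxS⟩).not_gt (hxL.trans_le (min_le_left B c))
  · exact (finite_Ioo L c).subset fun x hx => ⟨lt_of_not_ge fun h => hx.2 (hL h), hx.1⟩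

theorem Function.Periodic.finite_range_int {β : Type*} {f : ℤ → β} {n : ℤ} (hf : Periodic f n)
    (hn : 0 < n) : (range f).Finite := by
  refine ((finite_Ico 0 n).image f).subset ?_
  rintro _ ⟨x, rfl⟩
  obtain ⟨y, hy, hxy⟩ := hf.exists_mem_Ico₀ hn x
  exact ⟨y, hy, hxy.symm⟩

theorem Function.Periodic.sum_Icc_add {M : Type*} [AddCommMonoid M] {f : ℤ → M} {n : ℕ}
    (hf : Periodic f n) (c : ℤ) :
    ∑ i ∈ Finset.Icc (1 : ℤ) n, f (i + c) = ∑ i ∈ Finset.Icc (1 : ℤ) n, f i := by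
  let g : ℤ → M := fun c => ∑ k ∈ Finset.range n, f (c + k)
  have hg : Periodic g 1 := by
    intro c
    rcases n with _ | m
    · simp [g]
    · simp only [g]
      rw [Finset.sum_range_succ, Finset.sum_range_succ']
      congr 1
      · exact Finset.sum_congr rfl fun k _ => by push_cast; ring_nf
      · rw [Nat.cast_zero, add_zero, ← hf c]; push_cast; ring_nf
  have hIcc : ∀ h : ℤ → M, ∑ i ∈ Finset.Icc (1 : ℤ) n, h i = ∑ k ∈ Finset.range n, h (1 + k) := by
    intro h
    simp [Int.Icc_eq_finset_map, Finset.sum_map]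
  rw [hIcc, hIcc]
  calc ∑ k ∈ Finset.range n, f (1 + k + c) = g (1 + c * 1) :=
        Finset.sum_congr rfl fun k _ => by ring_nf
    _ = g 1 := hg.int_mul c 1

theorem periodic_sub_self_of_map_add {α : Type*} [AddCommGroup α] {f : α → α} {n : α}
    (hf : ∀ x, f (x + n) = f x + n) : Periodic (fun x => f x - x) n := fun x => by
  simp only [hf, add_sub_add_right_eq_sub]

theorem Equiv.symm_map_add {α : Type*} [Add α] (w : α ≃ α) {n : α}
    (hw : ∀ x, w (x + n) = w x + n) (y : α) : w.symm (y + n) = w.symm y + n :=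
  w.symm_apply_eq.2 (by rw [hw, w.apply_symm_apply])

theorem exists_le_add_of_map_add {n : ℤ} (hn : 0 < n) {f : ℤ → ℤ}
    (hf : ∀ x, f (x + n) = f x + n) : ∃ C, ∀ x, f x ≤ x + C := by
  obtain ⟨C, hC⟩ := ((periodic_sub_self_of_map_add hf).finite_range_int hn).bddAbove
  exact ⟨C, fun x => sub_le_iff_le_add'.1 (hC ⟨x, rfl⟩)⟩

theorem sub_mem_image_Iic {n : ℤ} (hn : 0 ≤ n) {w : ℤ ≃ ℤ} (hw : ∀ x, w (x + n) = w x + n)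
    (a : ℤ) : ∀ b ∈ w '' Iic a, b - n ∈ w '' Iic a := by
  rintro _ ⟨x, hx, rfl⟩
  refine ⟨x - n, ?_, eq_sub_of_add_eq ?_⟩
  · exact (sub_le_self x hn).trans hx
  · rw [← hw, sub_add_cancel]

theorem bddAbove_image_Iic {n : ℤ} (hn : 0 < n) {w : ℤ ≃ ℤ} (hw : ∀ x, w (x + n) = w x + n)
    (a : ℤ) : BddAbove (w '' Iic a) := by
  obtain ⟨C, hC⟩ := exists_le_add_of_map_add hn hw
  refine ⟨a + C, ?_⟩
  rintro _ ⟨x, hx, rfl⟩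
  linarith [hC x, mem_Iic.1 hx]

theorem exists_Iic_subset_image_Iic {n : ℤ} (hn : 0 < n) {w : ℤ ≃ ℤ}
    (hw : ∀ x, w (x + n) = w x + n) (a : ℤ) : ∃ L, Iic L ⊆ w '' Iic a := by
  obtain ⟨C, hC⟩ := exists_le_add_of_map_add hn (w.symm_map_add hw)
  refine ⟨a - C, fun y hy => ⟨w.symm y, ?_, w.apply_symm_apply y⟩⟩
  exact mem_Iic.2 (by linarith [hC y, mem_Iic.1 hy])

-- `sSup` is junk (`0`) unless `S` meets the class of `x` and is bounded above.
noncomputable def residueMax (n : ℤ) (S : Set ℤ) (x : ℤ) : ℤ :=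
  sSup {y | y ∈ S ∧ y ≡ x [ZMOD n]}

theorem residueMax_periodic (n : ℤ) (S : Set ℤ) : Periodic (residueMax n S) n := fun x => by
  simp only [residueMax, Int.ModEq, Int.add_emod_right]

theorem residueMax_mem_and_modEq {n : ℤ} (hn : 0 < n) {S : Set ℤ} (hbdd : BddAbove S) {L : ℤ}
    (hL : Iic L ⊆ S) (x : ℤ) : residueMax n S x ∈ S ∧ residueMax n S x ≡ x [ZMOD n] := by
  refine Int.csSup_mem (s := {y | y ∈ S ∧ y ≡ x [ZMOD n]})
    ⟨x - n * |x - L|, hL ?_, Int.modEq_iff_dvd.2 ⟨|x - L|, by ring⟩⟩ (hbdd.mono fun y hy => hy.1)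
  show x - n * |x - L| ≤ L
  nlinarith [le_abs_self (x - L), abs_nonneg (x - L)]

theorem le_residueMax {n : ℤ} {S : Set ℤ} (hbdd : BddAbove S) {y : ℤ} (hy : y ∈ S) :
    y ≤ residueMax n S y :=
  le_csSup (hbdd.mono fun _ hz => hz.1) ⟨hy, Int.ModEq.refl y⟩

theorem mem_of_modEq_of_le {n : ℤ} (hn : 0 < n) {S : Set ℤ} (hdown : ∀ b ∈ S, b - n ∈ S)
    {b y : ℤ} (hb : b ∈ S) (hyb : y ≡ b [ZMOD n]) (hle : y ≤ b) : y ∈ S := by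
  obtain ⟨k, hk⟩ := hyb.dvd
  lift k to ℕ using by nlinarith
  obtain rfl : y = b - n * k := by linarith
  clear hk hle hyb
  induction k with
  | zero => simpa using hb
  | succ k ih => simpa [mul_add, sub_add_eq_sub_sub] using hdown _ ih

theorem mem_iff_le_residueMax {n : ℤ} (hn : 0 < n) {S : Set ℤ} (hdown : ∀ b ∈ S, b - n ∈ S)
    (hbdd : BddAbove S) {L : ℤ} (hL : Iic L ⊆ S) (y : ℤ) : y ∈ S ↔ y ≤ residueMax n S y := by
  obtain ⟨hmem, hmod⟩ := residueMax_mem_and_modEq hn hbdd hL y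
  exact ⟨le_residueMax hbdd, mem_of_modEq_of_le hn hdown hmem hmod.symm⟩

def Equiv.addDisplacement {α : Type*} [AddGroup α] (δ : α → α)
    (hδ : ∀ x y, δ (x + δ y) = δ x) : α ≃ α where
  toFun x := x + δ x
  invFun y := y - δ y
  left_inv x := by simp only [hδ, add_sub_cancel_right]
  right_inv y := by
    have : δ (y - δ y) = δ y := by simpa using (hδ (y - δ y) y).symm
    simp only [this, sub_add_cancel]

theorem Function.Periodic.add_apply_eq_of_dvd {δ : ℤ → ℤ} {n : ℤ} (hper : Periodic δ n)
    (hdvd : ∀ x, n ∣ δ x) (x y : ℤ) : δ (x + δ y) = δ x := by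
  obtain ⟨k, hk⟩ := hdvd y
  rw [hk, mul_comm]
  exact hper.int_mul k x

theorem sub_sub_emod_lt_iff_le {n y t : ℤ} (hn : 0 < n) (h : t ≡ y [ZMOD n]) :
    y - (t - y % n) < n ↔ y ≤ t := by
  obtain ⟨k, hk⟩ := h.dvd
  have h0 := Int.emod_nonneg y hn.ne'
  have h1 := Int.emod_lt_of_pos y hn
  constructor
  · intro hlt
    have : k < 1 := by nlinarith
    nlinarith
  · intro; linarith

theorem exists_affinePerm_image_Iic_eq {n : ℕ} (hn : 0 < n) {S : Set ℤ}
    (hdown : ∀ b ∈ S, b - n ∈ S) (hbdd : BddAbove S) {L : ℤ} (hL : Iic L ⊆ S) :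
    ∃ (w : ℤ ≃ ℤ) (a : ℤ), (∀ x : ℤ, w (x + n) = w x + n) ∧
      (∑ i ∈ Finset.Icc (1 : ℤ) n, (w i - i)) = 0 ∧ S = w '' Iic a := by
  have hn' : (0 : ℤ) < n := by exact_mod_cast hn
  set δ : ℤ → ℤ := fun x => residueMax n S x - x % n
  have hper : Periodic δ n := fun x => by
    simp only [δ, residueMax_periodic n S x, Int.add_emod_right]
  have hdvd : ∀ x, (n : ℤ) ∣ δ x := fun x =>
    ((Int.mod_modEq x n).trans (residueMax_mem_and_modEq hn' hbdd hL x).2.symm).dvd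
  set u := Equiv.addDisplacement δ (hper.add_apply_eq_of_dvd hdvd)
  set D := ∑ i ∈ Finset.Icc (1 : ℤ) n, δ i
  set a := D / n
  refine ⟨(Equiv.subRight a).trans u, n - 1 + a, fun x => ?_, ?_, ?_⟩
  · simp only [Equiv.trans_apply, Equiv.subRight_apply, u, Equiv.addDisplacement, Equiv.coe_fn_mk]
    rw [add_sub_right_comm, hper]
    ring
  · calc ∑ i ∈ Finset.Icc (1 : ℤ) n, (((Equiv.subRight a).trans u) i - i)
        = ∑ i ∈ Finset.Icc (1 : ℤ) n, (δ (i + -a) - a) :=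
          Finset.sum_congr rfl fun i _ => by
            simp only [Equiv.trans_apply, Equiv.subRight_apply, u, Equiv.addDisplacement,
              Equiv.coe_fn_mk, sub_eq_add_neg]
            ring
      _ = D - n * a := by
          rw [Finset.sum_sub_distrib, hper.sum_Icc_add, Finset.sum_const, Int.card_Icc]
          simp [D]
      _ = 0 := by rw [Int.mul_ediv_cancel' (Finset.dvd_sum fun i _ => hdvd i), sub_self]
  · ext y
    rw [Equiv.image_eq_preimage_symm, mem_preimage, mem_Iic]
    have hu : u.symm y = y - δ y := rfl
    rw [Equiv.symm_trans_apply, hu, Equiv.subRight_symm_apply, add_le_add_iff_right,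
      Int.le_sub_one_iff, sub_sub_emod_lt_iff_le hn' (residueMax_mem_and_modEq hn' hbdd hL y).2]
    exact mem_iff_le_residueMax hn' hdown hbdd hL y

/-- A subset `S ⊆ ℤ` equals `w(ℤ_{≤ a})` for some element `w` of the affine
symmetric group `Ŝₙ` (modeled as affine permutations of `ℤ`: bijections
commuting with the shift by `n` and with zero total displacement on a period)
and some integer `a`, if and only if: (1) `b ∈ S → b - n ∈ S`; (2) `S ∩ ℤ_{>0}`
is finite; (3) `ℤ_{<0} \ S` is finite. -/
theorem nice_subset_characterization (n : ℕ) (hn : 2 ≤ n) (S : Set ℤ) :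
    (∃ (w : ℤ ≃ ℤ) (a : ℤ),
        (∀ x : ℤ, w (x + n) = w x + n) ∧
        (∑ i ∈ Finset.Icc (1 : ℤ) (n : ℤ), (w i - i)) = 0 ∧
        S = w '' Set.Iic a)
    ↔ ((∀ b ∈ S, b - (n : ℤ) ∈ S) ∧ (S ∩ Set.Ioi (0 : ℤ)).Finite ∧
        (Set.Iio (0 : ℤ) \ S).Finite) := by
  have hn' : (0 : ℤ) < n := by omega
  rw [finite_inter_Ioi_iff_bddAbove, finite_Iio_diff_iff_exists_Iic_subset]
  constructor
  · rintro ⟨w, a, hw, -, rfl⟩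
    exact ⟨sub_mem_image_Iic hn'.le hw a, bddAbove_image_Iic hn' hw a,
      exists_Iic_subset_image_Iic hn' hw a⟩
  · rintro ⟨hdown, hbdd, L, hL⟩
    exact exists_affinePerm_image_Iic_eq (by omega) hdown hbdd hL
end

section
/- Let α₁,…,αₙ ∈ ℝ be distinct, and let b, c ∈ ℝ each be distinct from all αⱼ. Set Bⱼ = (b−αⱼ)/(c−αⱼ) and let A ∈ ℝ. Then the function τ on ℤⁿ defined by τ(σ) = 1 + A·B₁^{σ₁}⋯Bₙ^{σₙ} satisfies the Hirota bilinear difference equation: for all σ ∈ ℤⁿ and distinct indices i, j, k, (αᵢ−αⱼ)·τ(σ+eₖ)·τ(σ+eᵢ+eⱼ) + (αⱼ−αₖ)·τ(σ+eᵢ)·τ(σ+eⱼ+eₖ) + (αₖ−αᵢ)·τ(σ+eⱼ)·τ(σ+eᵢ+eₖ) = 0. -/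
/-!
Shifting `σ` by `eₘ` multiplies `∏ₗ Bₗ^{σₗ}` by `Bₘ`, so with `P = ∏ₗ Bₗ^{σₗ}` every `τ` in the
relation has the form `1 + A·(product of some Bₘ)·P`. Expanding, the terms of degree `0` and `2` in
`A·P` cancel because `(αᵢ - αⱼ) + (αⱼ - αₖ) + (αₖ - αᵢ) = 0`, and the term of degree `1` vanishes by
a three-term rational identity for the Möbius values `(b - x)/(c - x)`.
-/

open Finset

theorem prod_zpow_add_single {ι G₀ : Type*} [Fintype ι] [DecidableEq ι] [CommGroupWithZero G₀]
    {B : ι → G₀} (hB : ∀ l, B l ≠ 0) (σ : ι → ℤ) (m : ι) :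
    ∏ l, B l ^ (σ + Pi.single m 1 : ι → ℤ) l = B m * ∏ l, B l ^ σ l := by
  have hsingle : ∏ l, B l ^ (Pi.single m 1 : ι → ℤ) l = B m :=
    (Fintype.prod_eq_single m fun l hl => by simp [Pi.single_eq_of_ne hl]).trans (by simp)
  simp only [Pi.add_apply, zpow_add₀ (hB _), prod_mul_distrib, hsingle, mul_comm]

theorem cyclic_sum_mobius_eq_zero {K : Type*} [Field K] {b c x y z : K}
    (hx : c ≠ x) (hy : c ≠ y) (hz : c ≠ z) :
    let β : K → K := fun t => (b - t) / (c - t)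
    (x - y) * (β z + β x * β y) + (y - z) * (β x + β y * β z) + (z - x) * (β y + β x * β z) = 0 := by
  have := sub_ne_zero.2 hx
  have := sub_ne_zero.2 hy
  have := sub_ne_zero.2 hz
  field_simp
  ring

theorem one_soliton_BHZ_general (n : ℕ) (α : Fin n → ℝ)
    (b c A : ℝ) (hb : ∀ j, b ≠ α j) (hc : ∀ j, c ≠ α j)
    (B : Fin n → ℝ) (hB : ∀ j, B j = (b - α j) / (c - α j))
    (τ : (Fin n → ℤ) → ℝ) (hτ : ∀ σ, τ σ = 1 + A * ∏ l, B l ^ σ l)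
    (σ : Fin n → ℤ) (i j k : Fin n) :
    (α i - α j) * τ (σ + Pi.single k 1) * τ (σ + Pi.single i 1 + Pi.single j 1)
      + (α j - α k) * τ (σ + Pi.single i 1) * τ (σ + Pi.single j 1 + Pi.single k 1)
      + (α k - α i) * τ (σ + Pi.single j 1) * τ (σ + Pi.single i 1 + Pi.single k 1) = 0 := by
  have hB0 : ∀ l, B l ≠ 0 := fun l => by
    rw [hB l]; exact div_ne_zero (sub_ne_zero.2 (hb l)) (sub_ne_zero.2 (hc l))
  simp only [hτ, prod_zpow_add_single hB0]
  rw [hB i, hB j, hB k]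
  linear_combination (A * ∏ l, B l ^ σ l) *
    cyclic_sum_mobius_eq_zero (b := b) (hc i) (hc j) (hc k)

/-- The 1-soliton ansatz `τ(σ) = 1 + A·∏ⱼ Bⱼ^{σⱼ}` with
`Bⱼ = (b-αⱼ)/(c-αⱼ)` satisfies the Hirota bilinear difference equation
(the BHZ relation) for all `σ ∈ ℤⁿ` and distinct indices `i, j, k`. -/
theorem one_soliton_BHZ (n : ℕ) (α : Fin n → ℝ) (hα : Function.Injective α)
    (b c A : ℝ) (hb : ∀ j, b ≠ α j) (hc : ∀ j, c ≠ α j)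
    (B : Fin n → ℝ) (hB : ∀ j, B j = (b - α j) / (c - α j))
    (τ : (Fin n → ℤ) → ℝ) (hτ : ∀ σ, τ σ = 1 + A * ∏ l, B l ^ σ l)
    (σ : Fin n → ℤ) (i j k : Fin n) (hij : i ≠ j) (hjk : j ≠ k) (hik : i ≠ k) :
    (α i - α j) * τ (σ + Pi.single k 1) * τ (σ + Pi.single i 1 + Pi.single j 1)
      + (α j - α k) * τ (σ + Pi.single i 1) * τ (σ + Pi.single j 1 + Pi.single k 1)
      + (α k - α i) * τ (σ + Pi.single j 1) * τ (σ + Pi.single i 1 + Pi.single k 1) = 0 :=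
  one_soliton_BHZ_general n α b c A hb hc B hB τ hτ σ i j k
end

section
/- Let f₁,…,f_N be nonzero reals, and b₁,…,b_N, c₁,…,c_N reals with bᵢ ≠ cⱼ for all i,j. Then det(δ_{i,j} + fᵢ(bⱼ−cⱼ)/(bᵢ−cⱼ))_{i,j=1}^N = Σ_{T ⊆ [N]} (∏_{i<j, i,j∈T} Z_{i,j}) · ∏_{i∈T} fᵢ, where Z_{i,j} = (bᵢ−bⱼ)(cᵢ−cⱼ)/((bᵢ−cⱼ)(cᵢ−bⱼ)). -/
/-!
Adding the identity to `M = (fᵢ(bⱼ - cⱼ)/(bᵢ - cⱼ))` expands `det (1 + M)` into the sum of the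
principal minors of `M`. Since `M = diag f · C · diag (b - c)` with `C = (1/(bᵢ - cⱼ))` the Cauchy
matrix, the minor on `T` is `∏_{i∈T} fᵢ (bᵢ - cᵢ)` times the Cauchy determinant on `T`, and
Cauchy's formula in the form `det C = ∏ᵢ (bᵢ - cᵢ)⁻¹ ∏_{i<j} Z_{i,j}` leaves `∏ Z · ∏ f`.
Cauchy's formula follows by induction on the size: the Schur complement of the corner entry of a
Cauchy matrix is again a Cauchy matrix, scaled by diagonal matrices on both sides.
-/

open Finset Matrix

namespace Matrix

theorem det_one_add_eq_sum_det_submatrix {n R : Type*} [Fintype n] [DecidableEq n] [CommRing R]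
    (M : Matrix n n R) :
    det (1 + M) = ∑ s : Finset n, (M.submatrix (↑) (↑) : Matrix s s R).det := by
  rw [add_comm]
  change detRowAlternating (M.row + (1 : Matrix n n R).row) = _
  exact (detRowAlternating.toMultilinearMap.map_add_univ _ _).trans
    (sum_congr rfl fun s _ => det_piecewise_one_eq_submatrix_det M s)

theorem det_succ_eq_mul_det_schur {K : Type*} [Field K] {m : ℕ}
    (A : Matrix (Fin (m + 1)) (Fin (m + 1)) K) (h : A 0 0 ≠ 0) :
    det A =
      A 0 0 * det (of fun i j : Fin m => A i.succ j.succ - A i.succ 0 / A 0 0 * A 0 j.succ) := by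
  let B : Matrix (Fin (m + 1)) (Fin (m + 1)) K :=
    of fun i j => if i = 0 then A 0 j else A i j - A i 0 / A 0 0 * A 0 j
  have hAB : det A = det B := by
    refine det_eq_of_forall_row_eq_smul_add_const (fun i => if i = 0 then 0 else A i 0 / A 0 0) 0
      (if_pos rfl) fun i j => ?_
    by_cases hi : i = 0 <;> simp [B, hi]
  rw [hAB, det_succ_column_zero, Fin.sum_univ_succ]
  simp [B, Fin.succ_ne_zero, h, submatrix]

/-- Since `Z_{i,j} = (bⱼ - bᵢ)(cᵢ - cⱼ)/((bᵢ - cⱼ)(bⱼ - cᵢ))`, this is the classical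
`∏_{i<j} (bⱼ - bᵢ)(cᵢ - cⱼ) / ∏_{i,j} (bᵢ - cⱼ)`. -/
theorem det_cauchy {K : Type*} [Field K] :
    ∀ {m : ℕ} (b c : Fin m → K), (∀ i j, b i ≠ c j) →
      det (of fun i j => (b i - c j)⁻¹) =
        (∏ i, (b i - c i)⁻¹) *
          ∏ i, ∏ j ∈ Ioi i, (b i - b j) * (c i - c j) / ((b i - c j) * (c i - b j))
  | 0, _, _, _ => by simp
  | m + 1, b, c, hbc => by
    have hbc' : ∀ i j, b i - c j ≠ 0 := fun i j => sub_ne_zero.2 (hbc i j)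
    have hschur : (of fun i j : Fin m => (b i.succ - c j.succ)⁻¹ -
          (b i.succ - c 0)⁻¹ / (b 0 - c 0)⁻¹ * (b 0 - c j.succ)⁻¹) =
        diagonal (fun i => (b i.succ - b 0) / (b i.succ - c 0)) *
          of (fun i j => (b i.succ - c j.succ)⁻¹) *
          diagonal (fun j => (c 0 - c j.succ) / (b 0 - c j.succ)) := by
      ext i j
      simp only [of_apply, mul_diagonal, diagonal_mul]
      field_simp [hbc' i.succ j.succ, hbc' i.succ 0, hbc' 0 j.succ, hbc' 0 0]
      ring
    rw [det_succ_eq_mul_det_schur _ (inv_ne_zero (hbc' 0 0))]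
    simp only [of_apply]
    rw [hschur, det_mul, det_mul, det_diagonal, det_diagonal,
      det_cauchy (fun i => b i.succ) (fun j => c j.succ) fun i j => hbc _ _]
    simp only [Fin.prod_univ_succ (fun i => (b i - c i)⁻¹),
      Fin.prod_univ_succ (fun i => ∏ j ∈ Ioi i, _), Fin.prod_Ioi_zero, Fin.prod_Ioi_succ]
    have hZ : ∀ j : Fin m, (b 0 - b j.succ) * (c 0 - c j.succ) /
        ((b 0 - c j.succ) * (c 0 - b j.succ)) =
        (b j.succ - b 0) / (b j.succ - c 0) * ((c 0 - c j.succ) / (b 0 - c j.succ)) := by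
      intro j
      have hcb : c 0 - b j.succ ≠ 0 := sub_ne_zero.2 (hbc j.succ 0).symm
      field_simp [hbc' j.succ 0, hbc' 0 j.succ, hcb]
      ring
    simp only [hZ, prod_mul_distrib]
    ring

theorem det_diagonal_mul_cauchy_mul_diagonal {K : Type*} [Field K] {m : ℕ}
    (f b c : Fin m → K) (hbc : ∀ i j, b i ≠ c j) :
    det (of fun i j => f i * (b j - c j) / (b i - c j)) =
      (∏ i, ∏ j ∈ Ioi i, (b i - b j) * (c i - c j) / ((b i - c j) * (c i - b j))) * ∏ i, f i := by
  have hfactor : (of fun i j => f i * (b j - c j) / (b i - c j)) =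
      diagonal f * of (fun i j => (b i - c j)⁻¹) * diagonal (fun j => b j - c j) := by
    ext i j
    simp only [of_apply, mul_diagonal, diagonal_mul]
    ring
  have hcancel : (∏ i, (b i - c i)) * ∏ i, (b i - c i)⁻¹ = 1 := by
    rw [← prod_mul_distrib]
    exact prod_eq_one fun i _ => mul_inv_cancel₀ (sub_ne_zero.2 (hbc i i))
  rw [hfactor, det_mul, det_mul, det_diagonal, det_diagonal, det_cauchy b c hbc]
  linear_combination (∏ i, f i) *
    (∏ i, ∏ j ∈ Ioi i, (b i - b j) * (c i - c j) / ((b i - c j) * (c i - b j))) * hcancel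

theorem det_submatrix_coe_eq_det_submatrix_orderEmbOfFin {α R : Type*} [LinearOrder α]
    [CommRing R] (M : Matrix α α R) (s : Finset α) :
    (M.submatrix (↑) (↑) : Matrix s s R).det =
      (M.submatrix (s.orderEmbOfFin rfl) (s.orderEmbOfFin rfl)).det := by
  rw [← det_submatrix_equiv_self (s.orderIsoOfFin rfl).toEquiv, submatrix_submatrix]
  rfl

end Matrix

theorem Finset.prod_prod_Ioi_orderEmbedding {ι α M : Type*} [Fintype ι] [Preorder ι]
    [LocallyFiniteOrderTop ι] [Preorder α] [DecidableLT α] [CommMonoid M] (e : ι ↪o α)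
    (g : α → α → M) :
    ∏ i, ∏ j ∈ Ioi i, g (e i) (e j) =
      ∏ a ∈ univ.map e.toEmbedding, ∏ b ∈ (univ.map e.toEmbedding).filter (a < ·), g a b := by
  have hfilter : ∀ i,
      (univ.map e.toEmbedding).filter (e i < ·) = (Ioi i).map e.toEmbedding := by
    intro i
    ext a
    simp only [mem_filter, mem_map, mem_univ, true_and, mem_Ioi]
    constructor
    · rintro ⟨⟨j, rfl⟩, hij⟩
      exact ⟨j, e.lt_iff_lt.1 hij, rfl⟩
    · rintro ⟨j, hij, rfl⟩
      exact ⟨⟨j, rfl⟩, e.lt_iff_lt.2 hij⟩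
  simp [hfilter]

theorem soliton_det_expansion_general (N : ℕ) (f b c : Fin N → ℝ)
    (hbc : ∀ i j, b i ≠ c j) :
    Matrix.det (Matrix.of fun i j : Fin N =>
        (if i = j then (1 : ℝ) else 0) + f i * (b j - c j) / (b i - c j)) =
      ∑ T : Finset (Fin N),
        (∏ i ∈ T, ∏ j ∈ T.filter fun j => i < j,
          ((b i - b j) * (c i - c j) / ((b i - c j) * (c i - b j)))) *
        ∏ i ∈ T, f i := by
  have hone_add : (of fun i j : Fin N =>
      (if i = j then (1 : ℝ) else 0) + f i * (b j - c j) / (b i - c j)) =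
      1 + of fun i j => f i * (b j - c j) / (b i - c j) := by
    ext i j
    simp [one_apply]
  rw [hone_add, det_one_add_eq_sum_det_submatrix]
  refine sum_congr rfl fun T _ => ?_
  set e := T.orderEmbOfFin rfl
  rw [det_submatrix_coe_eq_det_submatrix_orderEmbOfFin]
  refine (det_diagonal_mul_cauchy_mul_diagonal (fun i => f (e i)) (fun i => b (e i))
    (fun i => c (e i)) fun i j => hbc _ _).trans ?_
  have hprod_f : ∏ a ∈ univ.map e.toEmbedding, f a = ∏ i, f (e i) :=
    prod_map univ e.toEmbedding f
  rw [prod_prod_Ioi_orderEmbedding e fun i j =>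
    (b i - b j) * (c i - c j) / ((b i - c j) * (c i - b j)), ← hprod_f, map_orderEmbOfFin_univ]

/-- Determinantal form of the N-soliton τ-function:
`det(δ_{i,j} + fᵢ(bⱼ-cⱼ)/(bᵢ-cⱼ)) = Σ_{T⊆[N]} (∏_{i<j∈T} Z_{i,j}) ∏_{i∈T} fᵢ`
where `Z_{i,j} = (bᵢ-bⱼ)(cᵢ-cⱼ)/((bᵢ-cⱼ)(cᵢ-bⱼ))`. -/
theorem soliton_det_expansion (N : ℕ) (f b c : Fin N → ℝ)
    (hf : ∀ i, f i ≠ 0) (hbc : ∀ i j, b i ≠ c j) :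
    Matrix.det (Matrix.of fun i j : Fin N =>
        (if i = j then (1 : ℝ) else 0) + f i * (b j - c j) / (b i - c j)) =
      ∑ T : Finset (Fin N),
        (∏ i ∈ T, ∏ j ∈ T.filter fun j => i < j,
          ((b i - b j) * (c i - c j) / ((b i - c j) * (c i - b j)))) *
        ∏ i ∈ T, f i :=
  soliton_det_expansion_general N f b c hbc
end

section
/- Fix N ≥ 1, distinct reals b₁,…,b_N, c₁,…,c_N with bᵢ ≠ cⱼ and cᵢ ≠ bⱼ for all i ≠ j, nonzero reals A₁,…,A_N, and functions fᵢ: ℤⁿ → ℝ with fᵢ(σ) ≠ 0 for all σ. Define Z_{i,j} = (bᵢ−bⱼ)(cᵢ−cⱼ)/((bᵢ−cⱼ)(cᵢ−bⱼ)) and τ(σ) = Σ_{T⊆[N]} ∏_{i<j∈T} Z_{i,j} · ∏_{i∈T} fᵢ(σ). Fix k ∈ [N]. Let τ' be defined the same way but with f_k replaced by A_k²/f_k and Z_{i,k}, Z_{k,j} replaced by their reciprocals. Then τ'(σ) = (A_k²/f_k(σ)) · Σ_{T⊆[N]} ∏_{i<j∈T} Z_{i,j} · ∏_{i∈T} g_i(σ),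 where g_k = f_k/A_k² and g_j = f_j/Z_{k,j} (with Z_{k,j} interpreted as Z_{j,k} when j < k) for j ≠ k. -/
/-!
Split the subset sums according to whether `k ∈ T` and pair `S` with `insert k S` for
`S ∌ k`. Since `Z` is symmetric, adjoining `k` to `S` multiplies `∏_{i<j ∈ S} Z i j` by
`∏_{i ∈ S} Z k i`; hence the primed term at `S` is `A_k²/f_k` times the `g`-term at
`insert k S`, and the primed term at `insert k S` is `A_k²/f_k` times the `g`-term at `S`.
-/

open Finset

section PairProd

variable {ι M : Type*} [LinearOrder ι] [CommMonoid M]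

def pairProd (W : ι → ι → M) (T : Finset ι) : M :=
  ∏ i ∈ T, ∏ j ∈ T.filter (i < ·), W i j

lemma pairProd_congr {W W' : ι → ι → M} {T : Finset ι}
    (h : ∀ i ∈ T, ∀ j ∈ T, W i j = W' i j) : pairProd W T = pairProd W' T :=
  prod_congr rfl fun i hi => prod_congr rfl fun j hj => h i hi j (mem_filter.mp hj).1

lemma pairProd_insert {W : ι → ι → M} (hW : ∀ i j, W i j = W j i) {k : ι} {S : Finset ι}
    (hk : k ∉ S) : pairProd W (insert k S) = pairProd W S * ∏ i ∈ S, W k i := by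
  have inner : ∀ i ∈ S, ∏ j ∈ (insert k S).filter (i < ·), W i j =
      (if i < k then W k i else 1) * ∏ j ∈ S.filter (i < ·), W i j := by
    intro i hi
    rw [filter_insert]
    split_ifs
    · rw [prod_insert fun h => hk (mem_filter.mp h).1, hW]
    · rw [one_mul]
  have below : S.filter (¬ k < ·) = S.filter (· < k) :=
    filter_congr fun i hi => by
      rw [not_lt, le_iff_lt_or_eq, or_iff_left fun h : i = k => hk (h ▸ hi)]
  rw [pairProd, prod_insert hk, filter_insert, if_neg (lt_irrefl k), prod_congr rfl inner,
    prod_mul_distrib, ← prod_filter, ← below,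
    ← prod_filter_mul_prod_filter_not S (k < ·) (W k), pairProd]
  ac_rfl

end PairProd

lemma Finset.sum_univ_eq_sum_powerset_erase_add_insert {ι M : Type*} [Fintype ι] [DecidableEq ι]
    [AddCommMonoid M] (k : ι) (F : Finset ι → M) :
    ∑ T : Finset ι, F T = ∑ S ∈ (univ.erase k).powerset, (F S + F (insert k S)) := by
  rw [sum_add_distrib, ← sum_powerset_insert (notMem_erase k univ), insert_erase (mem_univ k),
    powerset_univ]

section Tau

variable {ι K : Type*} [LinearOrder ι] [Fintype ι] [Field K]

def tau (W : ι → ι → K) (x : ι → K) : K :=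
  ∑ T : Finset ι, pairProd W T * ∏ i ∈ T, x i

theorem tau_swap {W : ι → ι → K} (hW : ∀ i j, W i j = W j i) {k : ι}
    (hWk : ∀ i, i ≠ k → W k i ≠ 0) {x : ι → K} (hxk : x k ≠ 0) {a : K} (ha : a ≠ 0) :
    tau (fun i j => if i = k ∨ j = k then (W i j)⁻¹ else W i j)
        (fun i => if i = k then a / x k else x i) =
      a / x k * tau W (fun i => if i = k then x k / a else x i / W k i) := by
  set W' : ι → ι → K := fun i j => if i = k ∨ j = k then (W i j)⁻¹ else W i j
  set x' : ι → K := fun i => if i = k then a / x k else x i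
  set y : ι → K := fun i => if i = k then x k / a else x i / W k i
  have hW' : ∀ i j, W' i j = W' j i := fun i j => by simp only [W', hW i j, or_comm]
  rw [tau, tau, mul_sum, sum_univ_eq_sum_powerset_erase_add_insert k,
    sum_univ_eq_sum_powerset_erase_add_insert k]
  refine sum_congr rfl fun S hS => ?_
  have hkS : k ∉ S := fun h => notMem_erase k univ (mem_powerset.mp hS h)
  have hne : ∀ i ∈ S, i ≠ k := fun i hi h => hkS (h ▸ hi)
  have hpair : pairProd W' S = pairProd W S :=
    pairProd_congr fun i hi j hj => if_neg (not_or.mpr ⟨hne i hi, hne j hj⟩)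
  have hx' : ∏ i ∈ S, x' i = ∏ i ∈ S, x i := prod_congr rfl fun i hi => if_neg (hne i hi)
  have hy : ∏ i ∈ S, y i = (∏ i ∈ S, x i) / ∏ i ∈ S, W k i := by
    rw [← prod_div_distrib]
    exact prod_congr rfl fun i hi => if_neg (hne i hi)
  have hW'k : ∏ i ∈ S, W' k i = (∏ i ∈ S, W k i)⁻¹ := by
    rw [← prod_inv_distrib]
    exact prod_congr rfl fun i _ => if_pos (Or.inl rfl)
  have hWS : ∏ i ∈ S, W k i ≠ 0 := prod_ne_zero_iff.mpr fun i hi => hWk i (hne i hi)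
  rw [pairProd_insert hW' hkS, pairProd_insert hW hkS, prod_insert hkS, prod_insert hkS, hpair,
    hx', hy, hW'k]
  simp only [x', y, if_pos]
  field_simp
  ring

end Tau

theorem soliton_swap_symmetry_general (N n : ℕ)
    (b c A : Fin N → ℝ)
    (hbc : ∀ i j, b i ≠ c j)
    (hbb : Function.Injective b) (hcc : Function.Injective c)
    (hA : ∀ i, A i ≠ 0)
    (f : Fin N → (Fin n → ℤ) → ℝ) (hf : ∀ i σ, f i σ ≠ 0)
    (k : Fin N) (σ : Fin n → ℤ)
    (Z : Fin N → Fin N → ℝ)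
    (hZ : ∀ i j, Z i j = (b i - b j) * (c i - c j) / ((b i - c j) * (c i - b j)))
    (f' : Fin N → ℝ)
    (hf' : ∀ i, f' i = if i = k then (A k) ^ 2 / f k σ else f i σ)
    (Z' : Fin N → Fin N → ℝ)
    (hZ' : ∀ i j, Z' i j = if i = k ∨ j = k then (Z i j)⁻¹ else Z i j)
    (g : Fin N → ℝ)
    (hg : ∀ i, g i = if i = k then f k σ / (A k) ^ 2 else f i σ / Z k i) :
    (∑ T : Finset (Fin N),
        (∏ i ∈ T, ∏ j ∈ T.filter fun j => i < j, Z' i j) * ∏ i ∈ T, f' i) =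
      ((A k) ^ 2 / f k σ) *
        ∑ T : Finset (Fin N),
          (∏ i ∈ T, ∏ j ∈ T.filter fun j => i < j, Z i j) * ∏ i ∈ T, g i := by
  have hZ_symm : ∀ i j, Z i j = Z j i := fun i j => by rw [hZ, hZ]; ring
  have hZ_ne : ∀ i, i ≠ k → Z k i ≠ 0 := fun i hi => by
    rw [hZ]
    exact div_ne_zero
      (mul_ne_zero (sub_ne_zero.mpr (hbb.ne hi.symm)) (sub_ne_zero.mpr (hcc.ne hi.symm)))
      (mul_ne_zero (sub_ne_zero.mpr (hbc k i)) (sub_ne_zero.mpr (hbc i k).symm))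
  obtain rfl : f' = _ := funext hf'
  obtain rfl : Z' = _ := funext₂ hZ'
  obtain rfl : g = _ := funext hg
  exact tau_swap hZ_symm hZ_ne (x := fun i => f i σ) (hf k σ) (pow_ne_zero 2 (hA k))

/-- Algebraic core of the `b_k ↔ c_k` swap symmetry for N-soliton τ-functions:
replacing `f_k` by `A_k²/f_k` and each `Z_{i,k}, Z_{k,j}` by its reciprocal
transforms the subset sum into `(A_k²/f_k) · Σ_T ∏ Z ∏ g` with `g_k = f_k/A_k²`
and `g_j = f_j/Z_{k,j}` for `j ≠ k`. -/
theorem soliton_swap_symmetry (N n : ℕ) (hN : 1 ≤ N)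
    (b c A : Fin N → ℝ)
    (hbc : ∀ i j, b i ≠ c j)
    (hbb : Function.Injective b) (hcc : Function.Injective c)
    (hA : ∀ i, A i ≠ 0)
    (f : Fin N → (Fin n → ℤ) → ℝ) (hf : ∀ i σ, f i σ ≠ 0)
    (k : Fin N) (σ : Fin n → ℤ)
    (Z : Fin N → Fin N → ℝ)
    (hZ : ∀ i j, Z i j = (b i - b j) * (c i - c j) / ((b i - c j) * (c i - b j)))
    (f' : Fin N → ℝ)
    (hf' : ∀ i, f' i = if i = k then (A k) ^ 2 / f k σ else f i σ)
    (Z' : Fin N → Fin N → ℝ)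
    (hZ' : ∀ i j, Z' i j = if i = k ∨ j = k then (Z i j)⁻¹ else Z i j)
    (g : Fin N → ℝ)
    (hg : ∀ i, g i = if i = k then f k σ / (A k) ^ 2 else f i σ / Z k i) :
    (∑ T : Finset (Fin N),
        (∏ i ∈ T, ∏ j ∈ T.filter fun j => i < j, Z' i j) * ∏ i ∈ T, f' i) =
      ((A k) ^ 2 / f k σ) *
        ∑ T : Finset (Fin N),
          (∏ i ∈ T, ∏ j ∈ T.filter fun j => i < j, Z i j) * ∏ i ∈ T, g i :=
  soliton_swap_symmetry_general N n b c A hbc hbb hcc hA f hf k σ Z hZ f' hf' Z' hZ' g hg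
end
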